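/- Under the interference-alignment hypotheses, set t = ⌈r²/l⌉ and suppose 1 ≤ t < r. Let λ₀ = t + 1 + ⌊log_{r/(r−1)}((r−t)·l/r)⌋ and suppose λ₀ < k. Then every subset F ⊆ {1,…,k} with |F| = λ₀ satisfies Σ_{i∈F} rowSpace(S_i) = 𝔽^l. (That is, the standard-partition size λ satisfies λ ≤ t + 1 + ⌊log_{r/(r−1)}((r−t)·l/r)⌋.) -/

import Mathlib

/-!
Let `U` be the span of the repair subspaces of the nodes already chosen and add a node `j`.
By interference alignment every encoding matrix `C u j` maps `U` onto itself, while the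
images `W_j C u j` of the new repair subspace fill the whole space. Hence the `r` subspaces
`U + W_j C u j`, all of the same dimension as `U + W_j` and all containing `U`, sum to `𝔽^l`,
and counting dimensions gives `r · codim (U + W_j) ≤ (r - 1) · codim U`. Starting from
codimension `l = rβ`, the first `t` nodes each remove exactly `β` dimensions in the worst case
(because `(t - 1)β < r`), after which the codimension decays geometrically with ratio
`(r - 1)/r`; it reaches `0` once `(r - t)β < (r/(r - 1))^s`.
-/

open Module Submodule Finset

/-- Worst-case codimension after adding one more node: the largest `c'` with
`r * c' ≤ (r - 1) * c`. -/
def codimStep (r c : ℕ) : ℕ := (r - 1) * c / r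

theorem codimStep_mono (r : ℕ) : Monotone (codimStep r) :=
  fun _ _ h => Nat.div_le_div_right (Nat.mul_le_mul_left _ h)

theorem sub_le_codimStep {n r a b : ℕ} (hr : 0 < r) (hab : a ≤ b) (hb : b ≤ n)
    (h : n + r * a ≤ r * b + a) : n - b ≤ codimStep r (n - a) := by
  obtain ⟨x, rfl⟩ := Nat.exists_eq_add_of_le hab
  obtain ⟨y, rfl⟩ := Nat.exists_eq_add_of_le hb
  obtain ⟨s, rfl⟩ : ∃ s, r = s + 1 := ⟨r - 1, by omega⟩
  rw [codimStep, Nat.le_div_iff_mul_le hr, show a + x + y - a = x + y by omega,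
    Nat.add_sub_cancel, Nat.add_sub_cancel_left]
  nlinarith

theorem codimStep_sub_mul {r β i : ℕ} (hi : i < r) (h : i * β < r) :
    codimStep r ((r - i) * β) = (r - (i + 1)) * β := by
  obtain ⟨a, rfl⟩ : ∃ a, r = i + 1 + a := ⟨r - (i + 1), by omega⟩
  have hr : 0 < i + 1 + a := by omega
  rw [codimStep, show i + 1 + a - (i + 1) = a by omega, show i + 1 + a - i = a + 1 by omega,
    show (i + 1 + a - 1) * ((a + 1) * β) = i * β + (i + 1 + a) * (a * β) by
      rw [show i + 1 + a - 1 = i + a by omega]; ring,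
    Nat.add_mul_div_left _ _ hr, Nat.div_eq_of_lt h, zero_add]

theorem codimStep_iterate_mul {r β m : ℕ} (hm : m ≤ r) (h : (m - 1) * β < r) :
    (codimStep r)^[m] (r * β) = (r - m) * β := by
  induction m with
  | zero => simp
  | succ m ih =>
    have hmβ : m * β < r := by simpa using h
    have hprev : (m - 1) * β < r := (Nat.mul_le_mul_right β (by omega)).trans_lt hmβ
    rw [Function.iterate_succ_apply', ih (by omega) hprev, codimStep_sub_mul (by omega) hmβ]

theorem cast_codimStep_le {r : ℕ} (hr : 1 ≤ r) (c : ℕ) :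
    (codimStep r c : ℝ) ≤ (r - 1) / r * c := by
  refine Nat.cast_div_le.trans (le_of_eq ?_)
  push_cast [Nat.cast_sub hr]
  ring

theorem cast_codimStep_iterate_le {r : ℕ} (hr : 1 ≤ r) (s c : ℕ) :
    ((codimStep r)^[s] c : ℝ) ≤ ((r - 1) / r) ^ s * c := by
  induction s with
  | zero => simp
  | succ s ih =>
    have hnn : (0 : ℝ) ≤ (r - 1) / r := div_nonneg (by simp [hr]) (Nat.cast_nonneg r)
    rw [Function.iterate_succ_apply', pow_succ', mul_assoc]
    exact (cast_codimStep_le hr _).trans (mul_le_mul_of_nonneg_left ih hnn)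

theorem codimStep_iterate_eq_zero_of_lt_pow {r s c : ℕ} (hr : 2 ≤ r)
    (h : (c : ℝ) < ((r : ℝ) / (r - 1)) ^ s) : (codimStep r)^[s] c = 0 := by
  have hb : (0 : ℝ) < (r : ℝ) / (r - 1) := by
    have : (2 : ℝ) ≤ r := by exact_mod_cast hr
    exact div_pos (by linarith) (by linarith)
  have hlt : ((codimStep r)^[s] c : ℝ) < 1 := by
    refine (cast_codimStep_iterate_le (by omega) s c).trans_lt ?_
    rwa [← inv_div, inv_pow, inv_mul_lt_iff₀ (pow_pos hb s), mul_one]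
  exact Nat.lt_one_iff.1 (by exact_mod_cast hlt)

theorem lt_pow_of_eq_floor_logb_add_one {b x : ℝ} {s : ℕ} (hb : 1 < b) (hx : 0 < x)
    (hs : (s : ℤ) = ⌊Real.logb b x⌋ + 1) : x < b ^ s := by
  rw [← Real.rpow_natCast, ← Real.logb_lt_iff_lt_rpow hb hx]
  calc Real.logb b x < ⌊Real.logb b x⌋ + 1 := Int.lt_floor_add_one _
    _ = s := by exact_mod_cast hs.symm

theorem codimStep_iterate_eq_zero {r l t lam : ℕ} (hr : 2 ≤ r) (hl : 0 < l) (hrl : r ∣ l)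
    (ht : t = r ^ 2 ⌈/⌉ l) (ht1 : 1 ≤ t) (htr : t < r)
    (hlam : (lam : ℤ) =
      t + 1 + ⌊Real.logb ((r : ℝ) / ((r : ℝ) - 1)) (((r : ℝ) - t) * l / r)⌋) :
    (codimStep r)^[lam] l = 0 := by
  obtain ⟨β, rfl⟩ := hrl
  have hβ : 0 < β := Nat.pos_of_mul_pos_left hl
  have hrR : (2 : ℝ) ≤ r := by exact_mod_cast hr
  have hb : 1 < (r : ℝ) / (r - 1) := by rw [one_lt_div] <;> linarith
  have hfirst : (t - 1) * β < r := by
    have h : ¬ r ^ 2 ⌈/⌉ (r * β) ≤ t - 1 := by omega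
    rw [ceilDiv_le_iff_le_mul (by positivity), not_le] at h
    nlinarith
  have hx : ((r : ℝ) - t) * (r * β : ℕ) / r = ((r - t) * β : ℕ) := by
    push_cast [Nat.cast_sub htr.le]
    field_simp
  have hx1 : (1 : ℝ) ≤ ((r - t) * β : ℕ) := by exact_mod_cast Nat.mul_pos (by omega) hβ
  rw [hx] at hlam
  have hfloor := Int.floor_nonneg.2 (Real.logb_nonneg hb hx1)
  obtain ⟨s, rfl⟩ : ∃ s, lam = s + t := ⟨lam - t, by omega⟩
  rw [Function.iterate_add_apply, codimStep_iterate_mul htr.le hfirst]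
  exact codimStep_iterate_eq_zero_of_lt_pow hr
    (lt_pow_of_eq_floor_logb_add_one hb (by linarith) (by omega))

section Codimension

variable {K V : Type*} [DivisionRing K] [AddCommGroup V] [Module K V]

theorem Submodule.codim_biSup_le_iterate {ι : Type*} [DecidableEq ι] (r : ℕ)
    (W : ι → Submodule K V)
    (hstep : ∀ (F : Finset ι) (j : ι), j ∉ F →
      finrank K V - finrank K ↥(⨆ i ∈ insert j F, W i) ≤
        codimStep r (finrank K V - finrank K ↥(⨆ i ∈ F, W i)))
    (F : Finset ι) :
    finrank K V - finrank K ↥(⨆ i ∈ F, W i) ≤ (codimStep r)^[#F] (finrank K V) := by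
  induction F using Finset.induction_on with
  | empty => simp
  | insert j F hj ih =>
    rw [card_insert_of_notMem hj, Function.iterate_succ_apply']
    exact (hstep F j hj).trans (codimStep_mono r ih)

variable [FiniteDimensional K V]

theorem Submodule.finrank_sup_biSup_add_card_mul_le {ι : Type*} (U : Submodule K V)
    (W : ι → Submodule K V) (hU : ∀ u, U ≤ W u) (s : Finset ι) :
    finrank K ↥(U ⊔ ⨆ u ∈ s, W u) + #s * finrank K U ≤
      ∑ u ∈ s, finrank K (W u) + finrank K U := by
  classical
  induction s using Finset.induction_on with
  | empty => rw [show (⨆ u ∈ (∅ : Finset ι), W u) = ⊥ by simp, sup_bot_eq]; simp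
  | insert j s hj ih =>
    rw [Finset.iSup_insert, sum_insert hj, card_insert_of_notMem hj, sup_left_comm, add_one_mul]
    have hmod := finrank_sup_add_finrank_inf_eq (W j) (U ⊔ ⨆ u ∈ s, W u)
    have hinf := finrank_mono (le_inf (hU j) le_sup_left : U ≤ W j ⊓ (U ⊔ ⨆ u ∈ s, W u))
    omega

theorem Submodule.codim_sup_le_codimStep {ι : Type*} [Fintype ι] [Nonempty ι]
    (e : ι → V ≃ₗ[K] V) {U W : Submodule K V} (hU : ∀ u, U.map (e u : V →ₗ[K] V) = U)
    (hW : ⨆ u, W.map (e u : V →ₗ[K] V) = ⊤) :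
    finrank K V - finrank K ↥(U ⊔ W) ≤
      codimStep (Fintype.card ι) (finrank K V - finrank K U) := by
  have hmap (u : ι) : U ≤ (U ⊔ W).map (e u : V →ₗ[K] V) := by
    rw [map_sup, hU]
    exact le_sup_left
  have htop : U ⊔ ⨆ u ∈ univ, (U ⊔ W).map (e u : V →ₗ[K] V) = ⊤ := by
    simp only [mem_univ, iSup_true]
    rw [eq_top_iff, ← hW]
    exact le_sup_of_le_right (iSup_mono fun u => map_mono le_sup_right)
  have h := finrank_sup_biSup_add_card_mul_le U _ hmap univ
  rw [htop] at h
  simp only [finrank_top, LinearEquiv.finrank_map_eq, sum_const, card_univ, smul_eq_mul] at h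
  exact sub_le_codimStep Fintype.card_pos (finrank_mono le_sup_left) (U ⊔ W).finrank_le h

end Codimension

theorem Matrix.span_range_mul {R m n p : Type*} [CommSemiring R] [Fintype n]
    (A : Matrix m n R) (B : Matrix n p R) :
    span R (Set.range (A * B)) = (span R (Set.range A)).map B.vecMulLinear := by
  rw [map_span]
  exact congrArg _ (Set.range_comp B.vecMulLinear A)

theorem codim_biSup_span_range_insert_le {𝔽 ι κ m n : Type*} [Field 𝔽] [Fintype κ]
    [Nonempty κ] [Fintype n] [DecidableEq n] [DecidableEq ι]
    (S : ι → Matrix m n 𝔽) (C : κ → ι → Matrix n n 𝔽) (hCinv : ∀ u j, IsUnit (C u j))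
    (hIA1 : ∀ i j, j ≠ i → ∀ u,
      span 𝔽 (Set.range (S i * C u j)) = span 𝔽 (Set.range (S i)))
    (hIA3 : ∀ i, ⨆ u, span 𝔽 (Set.range (S i * C u i)) = ⊤)
    (F : Finset ι) (j : ι) (hj : j ∉ F) :
    finrank 𝔽 (n → 𝔽) - finrank 𝔽 ↥(⨆ i ∈ insert j F, span 𝔽 (Set.range (S i))) ≤
      codimStep (Fintype.card κ)
        (finrank 𝔽 (n → 𝔽) - finrank 𝔽 ↥(⨆ i ∈ F, span 𝔽 (Set.range (S i)))) := by
  let e u := Matrix.toLinearEquivRight'OfInv (hCinv u j).val_inv_mul (hCinv u j).mul_val_inv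
  have he u : (e u : (n → 𝔽) →ₗ[𝔽] n → 𝔽) = (C u j).vecMulLinear := rfl
  have hU u : (⨆ i ∈ F, span 𝔽 (Set.range (S i))).map (e u : (n → 𝔽) →ₗ[𝔽] n → 𝔽) =
      ⨆ i ∈ F, span 𝔽 (Set.range (S i)) := by
    simp only [Submodule.map_iSup, he, ← Matrix.span_range_mul]
    refine iSup_congr fun i => iSup_congr fun hi => hIA1 i j ?_ u
    rintro rfl
    exact hj hi
  have hW : ⨆ u, (span 𝔽 (Set.range (S j))).map (e u : (n → 𝔽) →ₗ[𝔽] n → 𝔽) = ⊤ := by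
    simpa only [he, ← Matrix.span_range_mul] using hIA3 j
  rw [Finset.iSup_insert, sup_comm]
  exact codim_sup_le_codimStep e hU hW

theorem stmt_14 {𝔽 : Type*} [Field 𝔽] (k r l : ℕ)
    (hr : 2 ≤ r) (hl : 0 < l) (hrl : r ∣ l)
    (S : Fin k → Matrix (Fin (l / r)) (Fin l) 𝔽)
    (C : Fin r → Fin k → Matrix (Fin l) (Fin l) 𝔽)
    (hCinv : ∀ u j, IsUnit (C u j))
    (hIA1 : ∀ (i j : Fin k), j ≠ i → ∀ u : Fin r,
      Submodule.span 𝔽 (Set.range (S i * C u j)) = Submodule.span 𝔽 (Set.range (S i)))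
    (hIA3 : ∀ i : Fin k,
      (⨆ u : Fin r, Submodule.span 𝔽 (Set.range (S i * C u i))) = ⊤)
    (t : ℕ) (ht : t = r ^ 2 ⌈/⌉ l) (ht1 : 1 ≤ t) (htr : t < r)
    (lam₀ : ℕ)
    (hlam₀ : (lam₀ : ℤ) = t + 1 +
      ⌊Real.logb ((r : ℝ) / ((r : ℝ) - 1)) (((r : ℝ) - t) * l / r)⌋) :
    ∀ F : Finset (Fin k), F.card = lam₀ →
      (⨆ i ∈ F, Submodule.span 𝔽 (Set.range (S i))) = ⊤ := by
  intro F hF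
  have : NeZero r := ⟨by omega⟩
  have hcodim := codim_biSup_le_iterate (Fintype.card (Fin r)) _
    (codim_biSup_span_range_insert_le S C hCinv hIA1 hIA3) F
  rw [Fintype.card_fin, finrank_fin_fun, hF, codimStep_iterate_eq_zero hr hl hrl ht ht1 htr hlam₀]
    at hcodim
  refine eq_top_of_finrank_eq (le_antisymm (finrank_le _) ?_)
  rw [finrank_fin_fun]
  omega
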